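/- Let n ≥ 1, let L₂, …, Lₙ be Kripke complete monomodal logics, and let L = K × L₂ × … × Lₙ, where K is the logic of the class of all 1-frames. Fix an n-modal formula φ whose variables are among p₁, …, p_m and let A and σ be the formula and translation defined from φ. Then φ ∈ L if and only if A → σ(φ) ∈ L; consequently K × L₂ × … × Lₙ is exponentially embeddable into its one-variable fragment. (Remark in Section 4: the analogue of Theorem 3.3 for K in place of T) -/

import Mathlib

namespace ModalProducts

/-- `N`-modal formulas over propositional variables indexed by `ℕ`
(the variable `pₖ` is `var k`; the extra variable `p` is `var 0`). -/
inductive MF (N : ℕ) : Type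
  | var : ℕ → MF N
  | bot : MF N
  | and : MF N → MF N → MF N
  | or  : MF N → MF N → MF N
  | imp : MF N → MF N → MF N
  | box : Fin N → MF N → MF N
deriving DecidableEq

namespace MF

variable {N : ℕ}

/-- negation: `¬ψ = ψ → ⊥`. -/
def neg (φ : MF N) : MF N := imp φ bot

/-- diamond: `◇ᵢψ = ¬□ᵢ¬ψ`. -/
def dia (i : Fin N) (φ : MF N) : MF N := neg (box i (neg φ))

/-- modal depth. -/
def md : MF N → ℕ
  | var _ => 0
  | bot => 0
  | and φ ψ => max (md φ) (md ψ)
  | or φ ψ => max (md φ) (md ψ)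
  | imp φ ψ => max (md φ) (md ψ)
  | box _ φ => md φ + 1

/-- length (number of symbols; the variable `pₖ` counts as `k+1` symbols,
accounting for the subscript). -/
def len : MF N → ℕ
  | var q => q + 1
  | bot => 1
  | and φ ψ => len φ + len ψ + 1
  | or φ ψ => len φ + len ψ + 1
  | imp φ ψ => len φ + len ψ + 1
  | box _ φ => len φ + 1

/-- the set of propositional variables occurring in a formula. -/
def vars : MF N → Set ℕ
  | var q => {q}
  | bot => ∅
  | and φ ψ => vars φ ∪ vars ψ
  | or φ ψ => vars φ ∪ vars ψ
  | imp φ ψ => vars φ ∪ vars ψ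
  | box _ φ => vars φ

/-- the largest index of a variable occurring in a formula (0 if none). -/
def maxVar : MF N → ℕ
  | var q => q
  | bot => 0
  | and φ ψ => max (maxVar φ) (maxVar ψ)
  | or φ ψ => max (maxVar φ) (maxVar ψ)
  | imp φ ψ => max (maxVar φ) (maxVar ψ)
  | box _ φ => maxVar φ

/-- the list of subformulas of a formula. -/
def subfs : MF N → List (MF N)
  | var q => [var q]
  | bot => [bot]
  | and φ ψ => and φ ψ :: (subfs φ ++ subfs ψ)
  | or φ ψ => or φ ψ :: (subfs φ ++ subfs ψ)
  | imp φ ψ => imp φ ψ :: (subfs φ ++ subfs ψ)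
  | box i φ => box i φ :: subfs φ

/-- uniform substitution of formulas for variables. -/
def subst (s : ℕ → MF N) : MF N → MF N
  | var q => s q
  | bot => bot
  | and φ ψ => and (subst s φ) (subst s ψ)
  | or φ ψ => or (subst s φ) (subst s ψ)
  | imp φ ψ => imp (subst s φ) (subst s ψ)
  | box i φ => box i (subst s φ)

end MF

/-- `θ` is a subformula of `φ`. -/
def Subformula {N : ℕ} (θ φ : MF N) : Prop := θ ∈ φ.subfs

/-- A Kripke `N`-frame: a nonempty set of points with `N` accessibility relations. -/
structure Frame (N : ℕ) where
  W : Type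
  nonempty : Nonempty W
  R : Fin N → W → W → Prop

/-- Truth of a formula at a point of a frame under a valuation. -/
def Sat {N : ℕ} (F : Frame N) (v : ℕ → Set F.W) : F.W → MF N → Prop
  | x, .var q => x ∈ v q
  | _, .bot => False
  | x, .and φ ψ => Sat F v x φ ∧ Sat F v x ψ
  | x, .or φ ψ => Sat F v x φ ∨ Sat F v x ψ
  | x, .imp φ ψ => Sat F v x φ → Sat F v x ψ
  | x, .box i φ => ∀ y, F.R i x y → Sat F v y φ

/-- Validity of a formula in a frame: truth at every point under every valuation. -/
def Valid {N : ℕ} (F : Frame N) (φ : MF N) : Prop := ∀ (v : ℕ → Set F.W) (x : F.W), Sat F v x φ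

/-- A set of formulas is valid in a frame if all of its members are. -/
def ValidSet {N : ℕ} (F : Frame N) (L : Set (MF N)) : Prop := ∀ φ ∈ L, Valid F φ

/-- The logic of a class of frames. -/
def Logic {N : ℕ} (C : Set (Frame N)) : Set (MF N) := {φ | ∀ F ∈ C, Valid F φ}

/-- A logic is Kripke complete if it is the logic of some nonempty class of frames. -/
def KripkeComplete {N : ℕ} (L : Set (MF N)) : Prop :=
  ∃ C : Set (Frame N), C.Nonempty ∧ L = Logic C

/-- The product of `N` 1-frames. -/
def prodFrame {N : ℕ} (Fs : Fin N → Frame 1) : Frame N where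
  W := ∀ i, (Fs i).W
  nonempty := ⟨fun i => (Fs i).nonempty.some⟩
  R := fun i x y => (Fs i).R 0 (x i) (y i) ∧ ∀ k, k ≠ i → x k = y k

/-- The product of `N` Kripke complete monomodal logics: the logic of the class of
products of frames of the factors. -/
def productLogic {N : ℕ} (Ls : Fin N → Set (MF 1)) : Set (MF N) :=
  Logic {F | ∃ Fs : Fin N → Frame 1, (∀ i, ValidSet (Fs i) (Ls i)) ∧ F = prodFrame Fs}

/-- A 1-frame is reflexive. -/
def ReflexiveFrame (F : Frame 1) : Prop := ∀ x, F.R 0 x x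

/-- The logic `T` of all reflexive 1-frames. -/
def logicT : Set (MF 1) := Logic {F | ReflexiveFrame F}

/-- The logic `K` of all 1-frames. -/
def logicK : Set (MF 1) := Logic Set.univ

/-- The logic `S5` of all 1-frames whose relation is an equivalence. -/
def logicS5 : Set (MF 1) := Logic {F | Equivalence (F.R 0)}

section Translation

variable {n : ℕ}

/-- the variable `p`. -/
def pv : MF (n+1) := .var 0

/-- `◆₁ψ = ◇₁(¬p ∧ ◇₁(p ∧ ψ))`. -/
def blackDia (ψ : MF (n+1)) : MF (n+1) :=
  MF.dia 0 (.and (MF.neg pv) (MF.dia 0 (.and pv ψ)))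

/-- `α_k = ◆₁ᵏ □₁ p`. -/
def alphaF (k : ℕ) : MF (n+1) := blackDia^[k] (.box 0 pv)

/-- `β_k = ¬p ∧ ◇₁(p ∧ α_k)`. -/
def betaF (k : ℕ) : MF (n+1) := .and (MF.neg pv) (MF.dia 0 (.and pv (alphaF k)))

/-- `B = β_{m+1}`. -/
def Bf (m : ℕ) : MF (n+1) := betaF (m+1)

/-- The translation `σ`: `σ(p_k) = β_k`, `σ(⊥) = ⊥`, `σ` commutes with `∧, ∨, →`,
and `σ(□ᵢψ) = □ᵢ(B → σ(ψ))`. -/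
def sigmaT (m : ℕ) : MF (n+1) → MF (n+1)
  | .var k => betaF k
  | .bot => .bot
  | .and φ ψ => .and (sigmaT m φ) (sigmaT m ψ)
  | .or φ ψ => .or (sigmaT m φ) (sigmaT m ψ)
  | .imp φ ψ => .imp (sigmaT m φ) (sigmaT m ψ)
  | .box i φ => .box i (.imp (Bf m) (sigmaT m φ))

/-- conjunction of a head formula with a list of formulas. -/
def bigAnd (ψ : MF (n+1)) (l : List (MF (n+1))) : MF (n+1) := l.foldl .and ψ

/-- `□^{≤k}`: `□^{≤0}ψ = ψ`, `□^{≤k+1}ψ = □^{≤k}ψ ∧ □₁□^{≤k}ψ ∧ … ∧ □ₙ□^{≤k}ψ`. -/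
def boxLe : ℕ → MF (n+1) → MF (n+1)
  | 0, ψ => ψ
  | k+1, ψ => bigAnd (boxLe k ψ) (List.ofFn fun i : Fin (n+1) => .box i (boxLe k ψ))

/-- `□₋₁^{≤k}`: like `□^{≤k}` but using only `□₂, …, □ₙ`. -/
def boxLeTail : ℕ → MF (n+1) → MF (n+1)
  | 0, ψ => ψ
  | k+1, ψ => bigAnd (boxLeTail k ψ) (List.ofFn fun i : Fin n => .box i.succ (boxLeTail k ψ))

/-- `◇₋₁^{≤k}ψ = ¬□₋₁^{≤k}¬ψ`. -/
def diaLeTail (k : ℕ) (ψ : MF (n+1)) : MF (n+1) := MF.neg (boxLeTail k (MF.neg ψ))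

/-- `A = B ∧ □^{≤md φ}(B → □₋₁^{≤md φ}B) ∧ □^{≤md φ}(◇₋₁^{≤md φ}B → B)`. -/
def Af (m : ℕ) (φ : MF (n+1)) : MF (n+1) :=
  .and (Bf m)
    (.and (boxLe φ.md (.imp (Bf m) (boxLeTail φ.md (Bf m))))
          (boxLe φ.md (.imp (diaLeTail φ.md (Bf m)) (Bf m))))

end Translation

end ModalProducts

open ModalProducts

/-!
Both directions compare a model of `φ` with a model of `A → σ(φ)` on the points where `B` holds,
with `p_k` read as `β_k`. By induction on `φ`, `σ` is faithful as soon as the two models are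
bisimilar on those points up to depth `md φ`.

If `φ` fails at `x` in a product `F₁ × F₂ × ⋯ × Fₙ`, replace `F₁` by `F₁ × Gadget`: every point gets
a fork followed by chains of lengths `2, 4, …, 2(m + 1)`, on which `p` is placed so that `β_k`
holds at an original point iff `p_k` does (`k ≤ m`), while `B = β_{m+1}` holds exactly at the
original points. The new first factor is a frame, hence a `K`-frame; `A` holds at `x` and `σ(φ)`
fails there.

Conversely, if `A` holds and `σ(φ)` fails at `y`, the last two conjuncts of `A` say that up to
depth `md φ` the truth of `B` only depends on the first coordinate. Restricting the first relation
to the targets `b` for which `B` holds at `y` with first coordinate `b` thus relativises the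
product to `B`, and the valuation `p_k ↦ β_k` refutes `φ` at `y`. Again, the restricted first
factor is a `K`-frame.

`A → σ(φ)` has length polynomial in `m` and in `(n + 1)^{md φ}`, hence exponential in that of `φ`.
-/

namespace ModalProducts

open MF Function

section Reach

variable {α : Type*} (r : α → α → Prop)

def ReachWithin : ℕ → α → α → Prop
  | 0, a, b => a = b
  | k + 1, a, b => ReachWithin k a b ∨ ∃ c, r a c ∧ ReachWithin k c b

variable {r}

theorem ReachWithin.refl : ∀ (k : ℕ) (a : α), ReachWithin r k a a
  | 0, _ => rfl
  | k + 1, a => Or.inl (ReachWithin.refl k a)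

theorem ReachWithin.mono {k k' : ℕ} (hk : k ≤ k') {a b : α} (h : ReachWithin r k a b) :
    ReachWithin r k' a b := by
  induction hk with
  | refl => exact h
  | step _ ih => exact Or.inl ih

theorem ReachWithin.snoc {k : ℕ} {a b c : α} (h : ReachWithin r k a b) (hbc : r b c) :
    ReachWithin r (k + 1) a c := by
  induction k generalizing a with
  | zero => exact Or.inr ⟨c, h ▸ hbc, rfl⟩
  | succ k ih =>
    rcases h with h | ⟨d, had, h⟩
    · exact Or.inl (ih h)
    · exact Or.inr ⟨d, had, ih h⟩

theorem ReachWithin.apply_eq {β : Type*} {f : α → β} (hf : ∀ a b, r a b → f a = f b) :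
    ∀ {k : ℕ} {a b : α}, ReachWithin r k a b → f a = f b
  | 0, _, _, h => congrArg f h
  | _ + 1, _, _, Or.inl h => ReachWithin.apply_eq hf h
  | _ + 1, _, _, Or.inr ⟨_, hac, h⟩ => (hf _ _ hac).trans (ReachWithin.apply_eq hf h)

theorem forall_reachWithin_succ {k : ℕ} {a : α} {P : α → Prop} :
    (∀ b, ReachWithin r (k + 1) a b → P b) ↔
      (∀ b, ReachWithin r k a b → P b) ∧ ∀ c, r a c → ∀ b, ReachWithin r k c b → P b := by
  simp only [ReachWithin, or_imp, forall_and, forall_exists_index, and_imp]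
  exact and_congr_right fun _ =>
    ⟨fun h c hc b hb => h b c hc hb, fun h b c hc hb => h c hc b hb⟩

end Reach

namespace Frame

variable {N n : ℕ}

def AnyStep (F : Frame N) (a b : F.W) : Prop := ∃ i, F.R i a b

def TailStep (F : Frame (n + 1)) (a b : F.W) : Prop := ∃ j : Fin n, F.R j.succ a b

def restrict (F : Frame N) (S : Set F.W) : Frame N :=
  ⟨F.W, F.nonempty, fun i a b => F.R i a b ∧ b ∈ S⟩

theorem restrict_univ (F : Frame N) : F.restrict Set.univ = F := by
  cases F
  simp [restrict]

end Frame

section Semantics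

variable {N n : ℕ}

theorem sat_neg (F : Frame N) (v : ℕ → Set F.W) (x : F.W) (φ : MF N) :
    Sat F v x (neg φ) ↔ ¬ Sat F v x φ := Iff.rfl

theorem sat_dia (F : Frame N) (v : ℕ → Set F.W) (x : F.W) (i : Fin N) (φ : MF N) :
    Sat F v x (dia i φ) ↔ ∃ y, F.R i x y ∧ Sat F v y φ := by
  simp only [dia, sat_neg, Sat, not_forall, not_not, exists_prop]

theorem sat_equiv {F G : Frame N} (e : G.W ≃ F.W) (he : ∀ i a b, F.R i (e a) (e b) ↔ G.R i a b)
    (v : ℕ → Set G.W) (φ : MF N) (x : G.W) :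
    Sat F (fun q => e.symm ⁻¹' v q) (e x) φ ↔ Sat G v x φ := by
  induction φ generalizing x with
  | var q => simp [Sat]
  | bot => exact Iff.rfl
  | and φ ψ ihφ ihψ => exact and_congr (ihφ x) (ihψ x)
  | or φ ψ ihφ ihψ => exact or_congr (ihφ x) (ihψ x)
  | imp φ ψ ihφ ihψ => exact imp_congr (ihφ x) (ihψ x)
  | box i φ ih =>
    show (∀ y, F.R i (e x) y → _) ↔ ∀ y, G.R i x y → _
    rw [e.symm.forall_congr_left]
    simp only [Equiv.symm_symm, he, ih]

theorem Valid.of_equiv {F G : Frame N} (e : G.W ≃ F.W)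
    (he : ∀ i a b, F.R i (e a) (e b) ↔ G.R i a b) {φ : MF N} (h : Valid F φ) : Valid G φ :=
  fun v x => (sat_equiv e he v φ x).1 (h _ _)

theorem sat_bigAnd (F : Frame (n + 1)) (v : ℕ → Set F.W) (x : F.W) (ψ : MF (n + 1))
    (l : List (MF (n + 1))) :
    Sat F v x (bigAnd ψ l) ↔ Sat F v x ψ ∧ ∀ χ ∈ l, Sat F v x χ := by
  induction l generalizing ψ with
  | nil => simp [bigAnd]
  | cons χ l ih =>
    rw [bigAnd, List.foldl_cons, ← bigAnd, ih, List.forall_mem_cons, Sat, and_assoc]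

theorem sat_boxLe (F : Frame (n + 1)) (v : ℕ → Set F.W) (k : ℕ) (ψ : MF (n + 1)) (x : F.W) :
    Sat F v x (boxLe k ψ) ↔ ∀ z, ReachWithin F.AnyStep k x z → Sat F v z ψ := by
  induction k generalizing x with
  | zero => exact ⟨fun h z hz => hz ▸ h, fun h => h x rfl⟩
  | succ k ih =>
    simp only [boxLe, sat_bigAnd, List.forall_mem_ofFn_iff, Sat, ih, forall_reachWithin_succ,
      Frame.AnyStep, forall_exists_index]
    exact and_congr_right fun _ => forall_comm

theorem sat_boxLeTail (F : Frame (n + 1)) (v : ℕ → Set F.W) (k : ℕ) (ψ : MF (n + 1))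
    (x : F.W) :
    Sat F v x (boxLeTail k ψ) ↔ ∀ z, ReachWithin F.TailStep k x z → Sat F v z ψ := by
  induction k generalizing x with
  | zero => exact ⟨fun h z hz => hz ▸ h, fun h => h x rfl⟩
  | succ k ih =>
    simp only [boxLeTail, sat_bigAnd, List.forall_mem_ofFn_iff, Sat, ih, forall_reachWithin_succ,
      Frame.TailStep, forall_exists_index]
    exact and_congr_right fun _ => forall_comm

theorem sat_diaLeTail (F : Frame (n + 1)) (v : ℕ → Set F.W) (k : ℕ) (ψ : MF (n + 1))
    (x : F.W) :
    Sat F v x (diaLeTail k ψ) ↔ ∃ z, ReachWithin F.TailStep k x z ∧ Sat F v z ψ := by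
  simp only [diaLeTail, sat_neg, sat_boxLeTail, not_forall, not_not, exists_prop]

theorem sat_Af_iff (F : Frame (n + 1)) (v : ℕ → Set F.W) (m : ℕ) (φ : MF (n + 1)) (x : F.W) :
    Sat F v x (Af m φ) ↔ Sat F v x (Bf m) ∧
      ∀ z, ReachWithin F.AnyStep φ.md x z → ∀ z', ReachWithin F.TailStep φ.md z z' →
        (Sat F v z (Bf m) ↔ Sat F v z' (Bf m)) := by
  simp only [Af, Sat, sat_boxLe, sat_boxLeTail, sat_diaLeTail, ← forall_and,
    forall_exists_index, and_imp]
  refine and_congr_right fun _ => forall₂_congr fun z _ => ?_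
  exact ⟨fun h z' hz' => ⟨fun hz => h.1 hz z' hz', h.2 z' hz'⟩,
    fun h => ⟨fun hz z' hz' => (h z' hz').1 hz, fun z' hz' => (h z' hz').2⟩⟩

theorem alphaF_succ (k : ℕ) : (alphaF (k + 1) : MF (n + 1)) = blackDia (alphaF k) :=
  iterate_succ_apply' ..

theorem sat_blackDia (F : Frame (n + 1)) (v : ℕ → Set F.W) (x : F.W) (ψ : MF (n + 1)) :
    Sat F v x (blackDia ψ) ↔ ∃ y, F.R 0 x y ∧ ¬ Sat F v y pv ∧
      ∃ y', F.R 0 y y' ∧ Sat F v y' pv ∧ Sat F v y' ψ := by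
  simp only [blackDia, sat_dia, Sat, sat_neg]

theorem sat_betaF (F : Frame (n + 1)) (v : ℕ → Set F.W) (x : F.W) (k : ℕ) :
    Sat F v x (betaF k) ↔
      ¬ Sat F v x pv ∧ ∃ y, F.R 0 x y ∧ Sat F v y pv ∧ Sat F v y (alphaF k) := by
  simp only [betaF, sat_dia, Sat, sat_neg]

end Semantics

section Translation

variable {n m : ℕ} {G F : Frame (n + 1)} {u : ℕ → Set G.W} {v : ℕ → Set F.W}
  {π : G.W → F.W} {P : ℕ → G.W → Prop}

/-- `P d z`: `z` is a `B`-point of `G` matched by `π` from which `d` more steps are allowed. -/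
theorem sat_sigmaT_iff
    (forth : ∀ d i z y, P (d + 1) z → G.R i z y → Sat G u y (Bf m) → P d y ∧ F.R i (π z) (π y))
    (back : ∀ d i z x, P (d + 1) z → F.R i (π z) x →
      ∃ y, G.R i z y ∧ Sat G u y (Bf m) ∧ P d y ∧ π y = x)
    (ψ : MF (n + 1)) (hvar : ∀ d z, P d z → ∀ q ∈ ψ.vars, (Sat G u z (betaF q) ↔ π z ∈ v q)) :
    ∀ d z, ψ.md ≤ d → P d z → (Sat G u z (sigmaT m ψ) ↔ Sat F v (π z) ψ) := by
  induction ψ with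
  | var q => exact fun d z _ hz => hvar d z hz q rfl
  | bot => exact fun _ _ _ _ => Iff.rfl
  | and φ ψ ihφ ihψ | or φ ψ ihφ ihψ | imp φ ψ ihφ ihψ =>
    intro d z hd hz
    have hd := max_le_iff.1 hd
    simp only [sigmaT, Sat]
    rw [ihφ (fun d z h q hq => hvar d z h q (Or.inl hq)) d z hd.1 hz,
      ihψ (fun d z h q hq => hvar d z h q (Or.inr hq)) d z hd.2 hz]
  | box i φ ih =>
    rintro (_ | d) z hd hz
    · simp [md] at hd
    replace ih := ih hvar d
    have hd : φ.md ≤ d := by simpa [md] using hd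
    constructor
    · intro H x hx
      obtain ⟨y, hy, hB, hPy, rfl⟩ := back d i z x hz hx
      exact (ih y hd hPy).1 (H y hy hB)
    · intro H y hy hB
      obtain ⟨hPy, hR⟩ := forth d i z y hz hy hB
      exact (ih y hd hPy).2 (H _ hR)

end Translation

inductive Gadget
  | base
  | fork
  | chain (k j : ℕ)

inductive GadgetStep (m : ℕ) : Gadget → Gadget → Prop
  | base_fork : GadgetStep m .base .fork
  | fork_chain {k : ℕ} : 1 ≤ k → k ≤ m + 1 → GadgetStep m .fork (.chain k 1)
  | chain_succ {k j : ℕ} : k ≤ m + 1 → 1 ≤ j → j < 2 * k →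
      GadgetStep m (.chain k j) (.chain k (j + 1))

/-- `p` fails at `chain k 1` exactly when `p_k` holds at `x` (`k ≤ m`); the parity pattern makes
`α_t` at `chain k (2 * i)` say that the chain ends `2 * t` steps ahead. -/
def Marked {α : Type*} (m : ℕ) (v : ℕ → Set α) (x : α) : Gadget → Prop
  | .base => False
  | .fork => True
  | .chain k j => Even j ∨ (j = 1 ∧ k ≤ m ∧ x ∉ v k)

section Gadget

variable {n m : ℕ}

theorem gadgetStep_base_iff {c : Gadget} : GadgetStep m .base c ↔ c = .fork :=
  ⟨by rintro ⟨⟩; rfl, by rintro rfl; exact .base_fork⟩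

theorem gadgetStep_fork_iff {c : Gadget} :
    GadgetStep m .fork c ↔ ∃ k, 1 ≤ k ∧ k ≤ m + 1 ∧ c = .chain k 1 :=
  ⟨by rintro ⟨⟩; exact ⟨_, ‹_›, ‹_›, rfl⟩, by rintro ⟨k, hk, hkm, rfl⟩; exact .fork_chain hk hkm⟩

theorem gadgetStep_chain_iff {k j : ℕ} {c : Gadget} :
    GadgetStep m (.chain k j) c ↔ k ≤ m + 1 ∧ 1 ≤ j ∧ j < 2 * k ∧ c = .chain k (j + 1) :=
  ⟨by rintro ⟨⟩; exact ⟨‹_›, ‹_›, ‹_›, rfl⟩,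
    by rintro ⟨hkm, hj, hjk, rfl⟩; exact .chain_succ hkm hj hjk⟩

@[reducible]
def gadgetFrame (m : ℕ) (F : Frame (n + 1)) : Frame (n + 1) where
  W := F.W × Gadget
  nonempty := F.nonempty.map (·, .base)
  R := Fin.cases (motive := fun _ => F.W × Gadget → F.W × Gadget → Prop)
    (fun a b => (a.2 = .base ∧ b.2 = .base ∧ F.R 0 a.1 b.1) ∨ (a.1 = b.1 ∧ GadgetStep m a.2 b.2))
    (fun j a b => a.2 = b.2 ∧ F.R j.succ a.1 b.1)

def gadgetVal (m : ℕ) (F : Frame (n + 1)) (v : ℕ → Set F.W) : ℕ → Set (gadgetFrame m F).W :=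
  fun _ => {z | Marked m v z.1 z.2}

variable {F : Frame (n + 1)} {v : ℕ → Set F.W}

theorem sat_pv_gadget (z : (gadgetFrame m F).W) :
    Sat (gadgetFrame m F) (gadgetVal m F v) z pv ↔ Marked m v z.1 z.2 :=
  Iff.rfl

theorem gadgetFrame_R_base {x : F.W} {y : (gadgetFrame m F).W} :
    (gadgetFrame m F).R 0 (x, .base) y ↔ (y.2 = .base ∧ F.R 0 x y.1) ∨ y = (x, .fork) := by
  obtain ⟨x', c⟩ := y
  simp [gadgetStep_base_iff, eq_comm]

theorem gadgetFrame_R_fork {x : F.W} {y : (gadgetFrame m F).W} :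
    (gadgetFrame m F).R 0 (x, .fork) y ↔ ∃ k, 1 ≤ k ∧ k ≤ m + 1 ∧ y = (x, .chain k 1) := by
  obtain ⟨x', c⟩ := y
  change (_ ∨ x = x' ∧ GadgetStep m .fork c) ↔ _
  simp only [gadgetStep_fork_iff, Prod.mk.injEq, reduceCtorEq, false_and, false_or]
  aesop

theorem gadgetFrame_R_chain {x : F.W} {k j : ℕ} {y : (gadgetFrame m F).W} :
    (gadgetFrame m F).R 0 (x, .chain k j) y ↔
      k ≤ m + 1 ∧ 1 ≤ j ∧ j < 2 * k ∧ y = (x, .chain k (j + 1)) := by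
  obtain ⟨x', c⟩ := y
  change (_ ∨ x = x' ∧ GadgetStep m (.chain k j) c) ↔ _
  simp only [gadgetStep_chain_iff, Prod.mk.injEq, reduceCtorEq, false_and, false_or]
  tauto

theorem not_marked_chain_odd {x : F.W} {k i : ℕ} (hi : 1 ≤ i) :
    ¬ Marked m v x (.chain k (2 * i + 1)) := by
  simp [Marked]
  omega

theorem sat_alphaF_chain (x : F.W) {k : ℕ} (hkm : k ≤ m + 1) (t : ℕ) :
    ∀ i, 1 ≤ i → i ≤ k →
      (Sat (gadgetFrame m F) (gadgetVal m F v) (x, .chain k (2 * i)) (alphaF t) ↔ k = i + t) := by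
  induction t with
  | zero =>
    intro i hi hik
    change (∀ y, (gadgetFrame m F).R 0 (x, .chain k (2 * i)) y → Marked m v y.1 y.2) ↔ _
    constructor
    · intro h
      by_contra hne
      exact not_marked_chain_odd hi (h _ (gadgetFrame_R_chain.2 ⟨hkm, by omega, by omega, rfl⟩))
    · rintro rfl y hy
      obtain ⟨-, -, hlt, -⟩ := gadgetFrame_R_chain.1 hy
      omega
  | succ t ih =>
    intro i hi hik
    rw [alphaF_succ, sat_blackDia]
    constructor
    · rintro ⟨y, hy, -, y', hy', -, hα⟩
      obtain ⟨-, -, hlt, rfl⟩ := gadgetFrame_R_chain.1 hy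
      obtain ⟨-, -, -, rfl⟩ := gadgetFrame_R_chain.1 hy'
      rw [show 2 * i + 1 + 1 = 2 * (i + 1) by ring, ih (i + 1) (by omega) (by omega)] at hα
      omega
    · intro h
      refine ⟨_, gadgetFrame_R_chain.2 ⟨hkm, by omega, by omega, rfl⟩, not_marked_chain_odd hi,
        _, gadgetFrame_R_chain.2 ⟨hkm, by omega, by omega, rfl⟩, Or.inl ⟨i + 1, by ring⟩, ?_⟩
      rw [show 2 * i + 1 + 1 = 2 * (i + 1) by ring, ih (i + 1) (by omega) (by omega)]
      omega

theorem sat_alphaF_fork (x : F.W) {q : ℕ} (hq : 1 ≤ q) :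
    Sat (gadgetFrame m F) (gadgetVal m F v) (x, .fork) (alphaF q) ↔
      q ≤ m + 1 ∧ (q ≤ m → x ∈ v q) := by
  obtain ⟨t, rfl⟩ : ∃ t, q = t + 1 := ⟨q - 1, by omega⟩
  rw [alphaF_succ, sat_blackDia]
  constructor
  · rintro ⟨y, hy, hnp, y', hy', -, hα⟩
    obtain ⟨k, hk, hkm, rfl⟩ := gadgetFrame_R_fork.1 hy
    obtain ⟨-, -, -, rfl⟩ := gadgetFrame_R_chain.1 hy'
    rw [sat_alphaF_chain x hkm t 1 le_rfl hk] at hα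
    obtain rfl : k = t + 1 := by omega
    exact ⟨hkm, fun hq => not_not.1 fun hx => hnp (Or.inr ⟨rfl, hq, hx⟩)⟩
  · rintro ⟨hqm, hx⟩
    refine ⟨_, gadgetFrame_R_fork.2 ⟨t + 1, by omega, hqm, rfl⟩, ?_,
      _, gadgetFrame_R_chain.2 ⟨hqm, le_rfl, by omega, rfl⟩, Or.inl ⟨1, rfl⟩,
      (sat_alphaF_chain x hqm t 1 le_rfl (by omega)).2 (by omega)⟩
    rintro (h | ⟨-, hq, hx'⟩)
    · exact Nat.not_even_one h
    · exact hx' (hx hq)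

theorem sat_betaF_base (x : F.W) {q : ℕ} (hq : 1 ≤ q) :
    Sat (gadgetFrame m F) (gadgetVal m F v) (x, .base) (betaF q) ↔
      q ≤ m + 1 ∧ (q ≤ m → x ∈ v q) := by
  rw [sat_betaF, ← sat_alphaF_fork x hq]
  constructor
  · rintro ⟨-, y, hy, hp, hα⟩
    rcases gadgetFrame_R_base.1 hy with ⟨hy2, -⟩ | rfl
    · simp [sat_pv_gadget, hy2, Marked] at hp
    · exact hα
  · exact fun h => ⟨id, _, gadgetFrame_R_base.2 (Or.inr rfl), trivial, h⟩

theorem sat_Bf_gadget (z : (gadgetFrame m F).W) :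
    Sat (gadgetFrame m F) (gadgetVal m F v) z (Bf m) ↔ z.2 = .base := by
  obtain ⟨x, c⟩ := z
  cases c with
  | base => exact iff_of_true ((sat_betaF_base x (by omega)).2 ⟨le_rfl, by omega⟩) rfl
  | fork => simp [Bf, sat_betaF, sat_pv_gadget, Marked]
  | chain k j =>
    simp only [reduceCtorEq, iff_false]
    rw [Bf, sat_betaF]
    rintro ⟨-, y, hy, hp, hα⟩
    obtain ⟨hkm, hj, hjk, rfl⟩ := gadgetFrame_R_chain.1 hy
    obtain ⟨i, hi⟩ : Even (j + 1) := by
      rcases hp with h | ⟨h, -⟩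
      · exact h
      · omega
    -- `α_{m+1}` needs `2 * (m + 1)` further chain steps, more than any chain has left here
    rw [show j + 1 = 2 * i by omega, sat_alphaF_chain x hkm _ i (by omega) (by omega)] at hα
    omega

theorem sat_Af_gadget (φ : MF (n + 1)) (x : F.W) :
    Sat (gadgetFrame m F) (gadgetVal m F v) (x, .base) (Af m φ) := by
  refine (sat_Af_iff _ _ _ _ _).2 ⟨(sat_Bf_gadget _).2 rfl, fun z _ z' hz' => ?_⟩
  rw [sat_Bf_gadget, sat_Bf_gadget, hz'.apply_eq (f := Prod.snd) fun _ _ ⟨_, h⟩ => h.1]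

theorem sat_sigmaT_gadget_iff (φ : MF (n + 1)) (hv : ∀ q ∈ φ.vars, 1 ≤ q ∧ q ≤ m) (x : F.W) :
    Sat (gadgetFrame m F) (gadgetVal m F v) (x, .base) (sigmaT m φ) ↔ Sat F v x φ := by
  refine sat_sigmaT_iff (G := gadgetFrame m F) (P := fun _ z => z.2 = .base) (π := Prod.fst)
    ?_ ?_ φ ?_ φ.md (x, .base) le_rfl rfl
  · rintro d i ⟨x, c⟩ y rfl hR hB
    rw [sat_Bf_gadget] at hB
    refine ⟨hB, ?_⟩
    cases i using Fin.cases with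
    | zero =>
      rcases gadgetFrame_R_base.1 hR with ⟨-, h⟩ | rfl
      exacts [h, nomatch hB]
    | succ j => exact hR.2
  · rintro d i ⟨x, c⟩ x' rfl h
    refine ⟨(x', .base), ?_, (sat_Bf_gadget _).2 rfl, rfl, rfl⟩
    cases i using Fin.cases with
    | zero => exact gadgetFrame_R_base.2 (Or.inl ⟨rfl, h⟩)
    | succ j => exact ⟨rfl, h⟩
  · rintro d ⟨x, c⟩ rfl q hq
    obtain ⟨hq1, hqm⟩ := hv q hq
    rw [sat_betaF_base x hq1]
    exact ⟨fun h => h.2 hqm, fun h => ⟨by omega, fun _ => h⟩⟩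

end Gadget

section Products

variable {N n m : ℕ}

theorem prodFrame_R_iff {Fs : Fin N → Frame 1} {i : Fin N} {x y : (prodFrame Fs).W} :
    (prodFrame Fs).R i x y ↔ (Fs i).R 0 (x i) (y i) ∧ ∀ k, k ≠ i → x k = y k :=
  Iff.rfl

def gadgetFactors (m : ℕ) (Fs : Fin (n + 1) → Frame 1) : Fin (n + 1) → Frame 1 :=
  Fin.cases (motive := fun _ => Frame 1) (gadgetFrame m (Fs 0)) (fun j => Fs j.succ)

def liftGadget (Fs : Fin (n + 1) → Frame 1) (z : (gadgetFrame m (prodFrame Fs)).W) :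
    (prodFrame (gadgetFactors m Fs)).W :=
  Fin.cases (motive := fun i => (gadgetFactors m Fs i).W) (z.1 0, z.2) (fun j => z.1 j.succ)

theorem liftGadget_R_iff (Fs : Fin (n + 1) → Frame 1) (i : Fin (n + 1))
    (a b : (gadgetFrame m (prodFrame Fs)).W) :
    (prodFrame (gadgetFactors m Fs)).R i (liftGadget Fs a) (liftGadget Fs b) ↔
      (gadgetFrame m (prodFrame Fs)).R i a b := by
  obtain ⟨x, c⟩ := a
  obtain ⟨x', c'⟩ := b
  have hx : x = x' ↔ x 0 = x' 0 ∧ ∀ j : Fin n, x j.succ = x' j.succ :=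
    funext_iff.trans Fin.forall_fin_succ
  cases i using Fin.cases with
  | zero =>
    rw [prodFrame_R_iff, Fin.forall_fin_succ]
    change ((c = .base ∧ c' = .base ∧ (Fs 0).R 0 (x 0) (x' 0)) ∨
        (x 0 = x' 0 ∧ GadgetStep m c c')) ∧ (_ ∧ ∀ j : Fin n, j.succ ≠ 0 → x j.succ = x' j.succ)
      ↔ _
    simp [prodFrame_R_iff, Fin.forall_fin_succ, hx]
    tauto
  | succ j =>
    rw [prodFrame_R_iff, Fin.forall_fin_succ]
    change (Fs j.succ).R 0 (x j.succ) (x' j.succ) ∧ ((0 : Fin (n + 1)) ≠ j.succ →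
      (x 0, c) = (x' 0, c')) ∧ (∀ i : Fin n, i.succ ≠ j.succ → x i.succ = x' i.succ) ↔ _
    simp [prodFrame_R_iff, Fin.forall_fin_succ, (Fin.succ_ne_zero j).symm]
    tauto

/-- The gadget model of a product is again a product: the gadget can be hung on the first
factor alone. -/
def gadgetEquiv (m : ℕ) (Fs : Fin (n + 1) → Frame 1) :
    (gadgetFrame m (prodFrame Fs)).W ≃ (prodFrame (gadgetFactors m Fs)).W where
  toFun := liftGadget Fs
  invFun w := (Fin.cases (motive := fun i => (Fs i).W) (w 0).1 (fun j => w j.succ), (w 0).2)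
  left_inv _ := Prod.ext (funext fun i => Fin.cases rfl (fun _ => rfl) i) rfl
  right_inv _ := funext fun i => Fin.cases rfl (fun _ => rfl) i

/-- Every factor is restricted, the others to `univ`, so that the product keeps literally the
points of `prodFrame Fs`. -/
def restrictFirst (Fs : Fin (n + 1) → Frame 1) (S : Set (Fs 0).W) : Fin (n + 1) → Frame 1 :=
  fun i => (Fs i).restrict (Fin.cases (motive := fun i => Set (Fs i).W) S (fun _ => Set.univ) i)

theorem restrictFirst_succ (Fs : Fin (n + 1) → Frame 1) (S : Set (Fs 0).W) (j : Fin n) :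
    restrictFirst Fs S j.succ = Fs j.succ :=
  Frame.restrict_univ _

theorem prodFrame_restrictFirst_R_iff {Fs : Fin (n + 1) → Frame 1} {S : Set (Fs 0).W}
    {i : Fin (n + 1)} {a b : (prodFrame Fs).W} (ha : a 0 ∈ S) :
    (prodFrame (restrictFirst Fs S)).R i a b ↔ (prodFrame Fs).R i a b ∧ b 0 ∈ S := by
  cases i using Fin.cases with
  | zero => exact and_right_comm
  | succ j =>
    constructor
    · rintro ⟨⟨h, -⟩, h'⟩
      exact ⟨⟨h, h'⟩, h' 0 (Fin.succ_ne_zero j).symm ▸ ha⟩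
    · rintro ⟨⟨h, h'⟩, -⟩
      exact ⟨⟨h, trivial⟩, h'⟩

theorem sat_sigmaT_iff_restrictFirst {Fs : Fin (n + 1) → Frame 1} {S : Set (Fs 0).W}
    {u : ℕ → Set (prodFrame Fs).W} {y : (prodFrame Fs).W} {D : ℕ}
    (hS : ∀ z, ReachWithin (prodFrame Fs).AnyStep D y z →
      (Sat (prodFrame Fs) u z (Bf m) ↔ z 0 ∈ S))
    (hy : y 0 ∈ S) (φ : MF (n + 1)) (hφ : φ.md ≤ D) :
    Sat (prodFrame Fs) u y (sigmaT m φ) ↔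
      Sat (prodFrame (restrictFirst Fs S)) (fun q => {z | Sat (prodFrame Fs) u z (betaF q)})
        y φ := by
  refine sat_sigmaT_iff (G := prodFrame Fs) (F := prodFrame (restrictFirst Fs S)) (π := id)
    (P := fun d z => ∃ k, k + d ≤ D ∧ ReachWithin (prodFrame Fs).AnyStep k y z ∧ z 0 ∈ S)
    ?_ ?_ φ ?_ D y hφ ⟨0, by omega, .refl 0 y, hy⟩
  · rintro d i z z' ⟨k, hk, hz, hz0⟩ hR hB
    have hz' := hz.snoc ⟨i, hR⟩
    have h0 := (hS z' (hz'.mono (by omega))).1 hB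
    exact ⟨⟨k + 1, by omega, hz', h0⟩, (prodFrame_restrictFirst_R_iff hz0).2 ⟨hR, h0⟩⟩
  · rintro d i z z' ⟨k, hk, hz, hz0⟩ hR
    obtain ⟨hR, h0⟩ := (prodFrame_restrictFirst_R_iff hz0).1 hR
    have hz' := hz.snoc ⟨i, hR⟩
    exact ⟨z', hR, (hS z' (hz'.mono (by omega))).2 h0, ⟨k + 1, by omega, hz', h0⟩, rfl⟩
  · exact fun _ _ _ _ _ => Iff.rfl

theorem ReachWithin.prodFrame_update {Fs : Fin N → Frame 1} (i : Fin N) {k : ℕ}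
    {a b : ∀ i, (Fs i).W} (h : ReachWithin (prodFrame Fs).AnyStep k a b)
    (w : ∀ i, (Fs i).W) (hw : w i = a i) :
    ReachWithin (prodFrame Fs).AnyStep k w (update w i (b i)) := by
  induction k generalizing a w with
  | zero => exact (update_eq_self_iff.2 (h ▸ hw).symm).symm
  | succ k ih =>
    rcases h with h | ⟨(c : ∀ i, (Fs i).W), ⟨j, hj⟩, h⟩
    · exact Or.inl (ih h w hw)
    by_cases hji : j = i
    · subst hji
      have hstep : (prodFrame Fs).R j w (update w j (c j)) :=
        ⟨by simpa [hw] using hj.1, fun k hk => (update_of_ne hk _ _).symm⟩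
      have := ih h (update w j (c j)) (update_self ..)
      rw [update_idem] at this
      exact Or.inr ⟨_, ⟨j, hstep⟩, this⟩
    · exact Or.inl (ih h w (hw.trans (hj.2 i (Ne.symm hji))))

theorem ReachWithin.tailStep_update_zero {Fs : Fin (n + 1) → Frame 1} {k : ℕ}
    {a b : ∀ i, (Fs i).W} (h : ReachWithin (prodFrame Fs).AnyStep k a b) :
    ReachWithin (prodFrame Fs).TailStep k (update a 0 (b 0)) b := by
  induction k generalizing a with
  | zero => exact h ▸ update_eq_self _ _
  | succ k ih =>
    rcases h with h | ⟨(c : ∀ i, (Fs i).W), ⟨j, hj⟩, h⟩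
    · exact Or.inl (ih h)
    have hac (k) (hk : k ≠ 0) (hkj : k ≠ j) : update a 0 (b 0) k = update c 0 (b 0) k := by
      rw [update_of_ne hk, update_of_ne hk, hj.2 k hkj]
    cases j using Fin.cases with
    | zero =>
      have : update a 0 (b 0) = update c 0 (b 0) := funext fun k => by
        rcases eq_or_ne k 0 with rfl | hk
        · simp
        · exact hac k hk hk
      exact Or.inl (this ▸ ih h)
    | succ j =>
      refine Or.inr ⟨update c 0 (b 0), ⟨j, ?_, fun k hk => ?_⟩, ih h⟩
      · simpa [update_of_ne (Fin.succ_ne_zero j)] using hj.1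
      · rcases eq_or_ne k 0 with rfl | hk0
        · simp
        · exact hac k hk0 hk

end Products

section Faithfulness

variable {n m : ℕ} {Ls : Fin n → Set (MF 1)} {φ : MF (n + 1)}

/-- Every 1-frame is a `K`-frame, so the first factor of a product is unconstrained. -/
theorem mem_productLogic_K_iff :
    φ ∈ productLogic (Fin.cases (motive := fun _ => Set (MF 1)) logicK Ls) ↔
      ∀ Fs : Fin (n + 1) → Frame 1, (∀ j, ValidSet (Fs j.succ) (Ls j)) →
        Valid (prodFrame Fs) φ := by
  constructor
  · intro h Fs hFs
    exact h _ ⟨Fs, fun i => Fin.cases (fun ψ hψ => hψ _ trivial) hFs i, rfl⟩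
  · rintro h _ ⟨Fs, hFs, rfl⟩
    exact h Fs fun j => hFs j.succ

theorem mem_of_imp_Af_sigmaT_mem (hv : ∀ q ∈ φ.vars, 1 ≤ q ∧ q ≤ m)
    (h : imp (Af m φ) (sigmaT m φ) ∈
      productLogic (Fin.cases (motive := fun _ => Set (MF 1)) logicK Ls)) :
    φ ∈ productLogic (Fin.cases (motive := fun _ => Set (MF 1)) logicK Ls) := by
  rw [mem_productLogic_K_iff] at h ⊢
  intro Fs hFs v x
  have hG : Valid (gadgetFrame m (prodFrame Fs)) (imp (Af m φ) (sigmaT m φ)) :=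
    Valid.of_equiv (gadgetEquiv m Fs) (liftGadget_R_iff Fs) (h _ hFs)
  exact (sat_sigmaT_gadget_iff φ hv x).1 (hG (gadgetVal m _ v) (x, .base) (sat_Af_gadget φ x))

theorem imp_Af_sigmaT_mem_of_mem
    (h : φ ∈ productLogic (Fin.cases (motive := fun _ => Set (MF 1)) logicK Ls)) :
    imp (Af m φ) (sigmaT m φ) ∈
      productLogic (Fin.cases (motive := fun _ => Set (MF 1)) logicK Ls) := by
  rw [mem_productLogic_K_iff] at h ⊢
  intro Fs hFs u y hA
  obtain ⟨hB, hinv⟩ := (sat_Af_iff _ _ _ _ _).1 hA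
  let S : Set (Fs 0).W := {b | Sat (prodFrame Fs) u (update y 0 b) (Bf m)}
  have hS (z) (hz : ReachWithin (prodFrame Fs).AnyStep φ.md y z) :
      Sat (prodFrame Fs) u z (Bf m) ↔ z 0 ∈ S :=
    (hinv _ (hz.prodFrame_update 0 y rfl) z hz.tailStep_update_zero).symm
  have hy : y 0 ∈ S := (hS y (.refl _ y)).1 hB
  refine (sat_sigmaT_iff_restrictFirst hS hy φ le_rfl).2 (h (restrictFirst Fs S) (fun j => ?_) _ y)
  rw [restrictFirst_succ]
  exact hFs j

theorem mem_productLogic_K_iff_imp_Af_sigmaT_mem (hv : ∀ q ∈ φ.vars, 1 ≤ q ∧ q ≤ m) :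
    φ ∈ productLogic (Fin.cases (motive := fun _ => Set (MF 1)) logicK Ls) ↔
      imp (Af m φ) (sigmaT m φ) ∈
        productLogic (Fin.cases (motive := fun _ => Set (MF 1)) logicK Ls) :=
  ⟨imp_Af_sigmaT_mem_of_mem, mem_of_imp_Af_sigmaT_mem hv⟩

end Faithfulness

section Size

variable {N n : ℕ}

theorem one_le_len (φ : MF N) : 1 ≤ φ.len := by
  cases φ <;> simp [len]

theorem md_le_len (φ : MF N) : φ.md ≤ φ.len := by
  induction φ <;> simp [md, len] at * <;> omega

theorem maxVar_le_len (φ : MF N) : φ.maxVar ≤ φ.len := by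
  induction φ <;> simp [maxVar, len] at * <;> omega

theorem le_maxVar_of_mem_vars {φ : MF N} {q : ℕ} (h : q ∈ φ.vars) : q ≤ φ.maxVar := by
  induction φ with
  | var p => exact le_of_eq h
  | bot => exact h.elim
  | and φ ψ ihφ ihψ | or φ ψ ihφ ihψ | imp φ ψ ihφ ihψ =>
    rcases h with h | h
    · exact (ihφ h).trans (le_max_left _ _)
    · exact (ihψ h).trans (le_max_right _ _)
  | box i φ ih => exact ih h

theorem len_alphaF (k : ℕ) : (alphaF k : MF (n + 1)).len = 16 * k + 2 := by
  induction k with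
  | zero => rfl
  | succ k ih =>
    rw [alphaF_succ]
    simp only [blackDia, dia, neg, len, pv, ih]
    ring

theorem len_Bf (m : ℕ) : (Bf m : MF (n + 1)).len = 16 * m + 29 := by
  simp only [Bf, betaF, dia, neg, len, pv, len_alphaF]
  ring

theorem len_bigAnd (ψ : MF (n + 1)) (l : List (MF (n + 1))) :
    (bigAnd ψ l).len = ψ.len + (l.map (·.len + 1)).sum := by
  induction l generalizing ψ with
  | nil => simp [bigAnd]
  | cons χ l ih =>
    rw [bigAnd, List.foldl_cons, ← bigAnd, ih]
    simp only [len, List.map_cons, List.sum_cons]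
    ring

theorem len_boxLe (k : ℕ) (ψ : MF (n + 1)) :
    (boxLe k ψ).len + 2 = (n + 2) ^ k * (ψ.len + 2) := by
  induction k with
  | zero => simp [boxLe]
  | succ k ih =>
    rw [boxLe, len_bigAnd, List.map_ofFn, List.sum_ofFn]
    simp only [comp_apply, len, Finset.sum_const, Finset.card_univ, Fintype.card_fin, smul_eq_mul]
    rw [pow_succ, mul_right_comm, ← ih]
    ring

theorem len_boxLeTail (k : ℕ) (ψ : MF (n + 1)) :
    (boxLeTail k ψ).len + 2 = (n + 1) ^ k * (ψ.len + 2) := by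
  induction k with
  | zero => simp [boxLeTail]
  | succ k ih =>
    rw [boxLeTail, len_bigAnd, List.map_ofFn, List.sum_ofFn]
    simp only [comp_apply, len, Finset.sum_const, Finset.card_univ, Fintype.card_fin, smul_eq_mul]
    rw [pow_succ, mul_right_comm, ← ih]
    ring

theorem len_sigmaT_le {m : ℕ} {ψ : MF (n + 1)} (h : ∀ q ∈ ψ.vars, q ≤ m) :
    (sigmaT m ψ).len ≤ (16 * m + 33) * ψ.len := by
  induction ψ with
  | var q =>
    have : q ≤ m := h q rfl
    simp only [sigmaT, betaF, dia, neg, len, pv, len_alphaF]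
    nlinarith
  | bot => simp only [sigmaT, len]; omega
  | and φ ψ ihφ ihψ | or φ ψ ihφ ihψ | imp φ ψ ihφ ihψ =>
    have h1 := ihφ fun q hq => h q (Or.inl hq)
    have h2 := ihψ fun q hq => h q (Or.inr hq)
    simp only [sigmaT, len] at *
    nlinarith
  | box i φ ih =>
    have := ih h
    simp only [sigmaT, len, len_Bf] at *
    nlinarith

theorem len_Af_le (m : ℕ) (φ : MF (n + 1)) :
    (Af m φ).len ≤ 5 * (16 * m + 33) * ((n + 2) ^ φ.md) ^ 2 := by
  have hT := len_boxLeTail (n := n) φ.md (Bf m)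
  have hT' := len_boxLeTail (n := n) φ.md (neg (Bf m))
  have hX := len_boxLe (n := n) φ.md (imp (Bf m) (boxLeTail φ.md (Bf m)))
  have hY := len_boxLe (n := n) φ.md (imp (diaLeTail φ.md (Bf m)) (Bf m))
  have hM : (n + 1) ^ φ.md ≤ (n + 2) ^ φ.md := Nat.pow_le_pow_left (by omega) _
  have h1 : 1 ≤ (n + 1) ^ φ.md := Nat.one_le_pow _ _ (by omega)
  simp only [Af, len, diaLeTail, neg, len_Bf] at *
  set M := (n + 2) ^ φ.md
  set M' := (n + 1) ^ φ.md
  nlinarith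

theorem len_imp_Af_sigmaT_le (φ : MF (n + 1)) :
    (imp (Af φ.maxVar φ) (sigmaT φ.maxVar φ)).len ≤ (1200 * (n + 2) ^ 2) ^ φ.len := by
  have hℓ := one_le_len φ
  have hs : 16 * φ.maxVar + 33 ≤ 49 * φ.len := by have := maxVar_le_len φ; omega
  have hA := len_Af_le φ.maxVar φ
  have hσ := len_sigmaT_le fun q (hq : q ∈ φ.vars) => le_maxVar_of_mem_vars hq
  have hM : ((n + 2) ^ φ.md) ^ 2 ≤ ((n + 2) ^ 2) ^ φ.len := by
    rw [← pow_mul, ← pow_mul']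
    exact Nat.pow_le_pow_right (by omega) (by have := md_le_len φ; omega)
  have hM1 : 1 ≤ ((n + 2) ^ 2) ^ φ.len := Nat.one_le_pow _ _ (by positivity)
  have hℓ4 : φ.len ^ 2 ≤ 4 ^ φ.len := by
    rw [show (4 : ℕ) = 2 ^ 2 by rfl, ← pow_mul, mul_comm, pow_mul]
    exact Nat.pow_le_pow_left Nat.lt_two_pow_self.le 2
  set X := ((n + 2) ^ 2) ^ φ.len
  calc (imp (Af φ.maxVar φ) (sigmaT φ.maxVar φ)).len
      = (Af φ.maxVar φ).len + (sigmaT φ.maxVar φ).len + 1 := rfl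
    _ ≤ 5 * (49 * φ.len) * X + 49 * φ.len * φ.len + 1 := by
      have := Nat.mul_le_mul (Nat.mul_le_mul_left 5 hs) hM
      have := Nat.mul_le_mul_right φ.len hs
      omega
    _ ≤ 300 * φ.len ^ 2 * X := by
      have h1 : φ.len * X ≤ φ.len ^ 2 * X := Nat.mul_le_mul_right X (by nlinarith)
      have h2 : φ.len ^ 2 ≤ φ.len ^ 2 * X := Nat.le_mul_of_pos_right _ hM1
      have h3 : 1 ≤ φ.len ^ 2 := Nat.one_le_pow _ _ hℓ
      nlinarith
    _ ≤ 300 ^ φ.len * 4 ^ φ.len * X := by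
      gcongr
      exact Nat.le_self_pow (by omega) 300
    _ = (1200 * (n + 2) ^ 2) ^ φ.len := by rw [← mul_pow, ← mul_pow]; norm_num

end Size

section OneVariable

variable {n : ℕ}

theorem vars_alphaF (k : ℕ) : (alphaF k : MF (n + 1)).vars ⊆ {0} := by
  induction k with
  | zero => simp [alphaF, vars, pv]
  | succ k ih => simpa [alphaF_succ, blackDia, dia, neg, vars, pv] using ih

theorem vars_betaF (k : ℕ) : (betaF k : MF (n + 1)).vars ⊆ {0} := by
  simpa [betaF, dia, neg, vars, pv] using vars_alphaF k

theorem vars_sigmaT (m : ℕ) (ψ : MF (n + 1)) : (sigmaT m ψ).vars ⊆ {0} := by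
  induction ψ with
  | var q => exact vars_betaF q
  | bot => exact Set.empty_subset _
  | and φ ψ ihφ ihψ | or φ ψ ihφ ihψ | imp φ ψ ihφ ihψ => exact Set.union_subset ihφ ihψ
  | box i φ ih => exact Set.union_subset (vars_betaF _) ih

theorem vars_bigAnd {S : Set ℕ} {ψ : MF (n + 1)} {l : List (MF (n + 1))} (hψ : ψ.vars ⊆ S)
    (hl : ∀ χ ∈ l, χ.vars ⊆ S) : (bigAnd ψ l).vars ⊆ S := by
  induction l generalizing ψ with
  | nil => exact hψ
  | cons χ l ih =>
    rw [List.forall_mem_cons] at hl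
    exact ih (Set.union_subset hψ hl.1) hl.2

theorem vars_boxLe {S : Set ℕ} (k : ℕ) {ψ : MF (n + 1)} (hψ : ψ.vars ⊆ S) :
    (boxLe k ψ).vars ⊆ S := by
  induction k with
  | zero => exact hψ
  | succ k ih => exact vars_bigAnd ih (List.forall_mem_ofFn_iff.2 fun _ => ih)

theorem vars_boxLeTail {S : Set ℕ} (k : ℕ) {ψ : MF (n + 1)} (hψ : ψ.vars ⊆ S) :
    (boxLeTail k ψ).vars ⊆ S := by
  induction k with
  | zero => exact hψ
  | succ k ih => exact vars_bigAnd ih (List.forall_mem_ofFn_iff.2 fun _ => ih)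

theorem vars_imp_Af_sigmaT (m : ℕ) (φ : MF (n + 1)) :
    (imp (Af m φ) (sigmaT m φ)).vars ⊆ {0} := by
  have hB : (Bf m : MF (n + 1)).vars ⊆ {0} := vars_betaF _
  have hnB : (neg (Bf m) : MF (n + 1)).vars ⊆ {0} := Set.union_subset hB (Set.empty_subset _)
  refine Set.union_subset (Set.union_subset hB (Set.union_subset ?_ ?_)) (vars_sigmaT m φ)
  · exact vars_boxLe _ (Set.union_subset hB (vars_boxLeTail _ hB))
  · exact vars_boxLe _ (Set.union_subset
      (Set.union_subset (vars_boxLeTail _ hnB) (Set.empty_subset _)) hB)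

end OneVariable

end ModalProducts

theorem products_with_K_embedding_general (n : ℕ) (Ls : Fin n → Set (MF 1))
    (L : Set (MF (n+1)))
    (hL : L = productLogic (Fin.cases (motive := fun _ => Set (MF 1)) logicK Ls)) :
    (∀ (m : ℕ) (φ : MF (n+1)), (∀ q ∈ φ.vars, 1 ≤ q ∧ q ≤ m) →
      (φ ∈ L ↔ MF.imp (Af m φ) (sigmaT m φ) ∈ L)) ∧
    (∃ c : ℕ, ∀ φ : MF (n+1), (∀ q ∈ φ.vars, 1 ≤ q) →
      (MF.imp (Af φ.maxVar φ) (sigmaT φ.maxVar φ)).vars ⊆ {0} ∧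
      (φ ∈ L ↔ MF.imp (Af φ.maxVar φ) (sigmaT φ.maxVar φ) ∈ L) ∧
      (MF.imp (Af φ.maxVar φ) (sigmaT φ.maxVar φ)).len ≤ c ^ φ.len) := by
  subst hL
  refine ⟨fun m φ hv => mem_productLogic_K_iff_imp_Af_sigmaT_mem hv, 1200 * (n + 2) ^ 2,
    fun φ hv => ⟨vars_imp_Af_sigmaT _ φ, ?_, len_imp_Af_sigmaT_le φ⟩⟩
  exact mem_productLogic_K_iff_imp_Af_sigmaT_mem fun q hq => ⟨hv q hq, le_maxVar_of_mem_vars hq⟩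

/-- **Remark (Section 4): the analogue of Theorem 3.3 with `K` in place of `T`.**
Let `n ≥ 1`, let `L₂, …, Lₙ` be Kripke complete monomodal logics, and let
`L = K × L₂ × … × Lₙ`.  For an `(n+1)`-modal formula `φ` whose variables are among
`p₁, …, p_m`, with `A` and `σ` defined from `φ`: `φ ∈ L` iff `A → σ(φ) ∈ L`;
consequently `L` is exponentially embeddable into its one-variable fragment. -/
theorem products_with_K_embedding (n : ℕ) (Ls : Fin n → Set (MF 1))
    (hLs : ∀ i, KripkeComplete (Ls i))
    (L : Set (MF (n+1)))
    (hL : L = productLogic (Fin.cases (motive := fun _ => Set (MF 1)) logicK Ls)) :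
    (∀ (m : ℕ) (φ : MF (n+1)), (∀ q ∈ φ.vars, 1 ≤ q ∧ q ≤ m) →
      (φ ∈ L ↔ MF.imp (Af m φ) (sigmaT m φ) ∈ L)) ∧
    (∃ c : ℕ, ∀ φ : MF (n+1), (∀ q ∈ φ.vars, 1 ≤ q) →
      (MF.imp (Af φ.maxVar φ) (sigmaT φ.maxVar φ)).vars ⊆ {0} ∧
      (φ ∈ L ↔ MF.imp (Af φ.maxVar φ) (sigmaT φ.maxVar φ) ∈ L) ∧
      (MF.imp (Af φ.maxVar φ) (sigmaT φ.maxVar φ)).len ≤ c ^ φ.len) :=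
  products_with_K_embedding_general n Ls L hL
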